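/- Let f : B → ℍ be a function on an open ball B ⊆ ℍ with center at a real point p₀ and radius R > 0. Then f is slice regular on B if and only if there exists a sequence (aₙ)ₙ of quaternions such that the series Σₙ (q−p₀)ⁿ·aₙ converges to f(q) for all q ∈ B. -/

import Mathlib

/-!
For a unit imaginary `I`, `z ↦ Re z + (Im z) I` is an isometric `ℝ`-algebra embedding of `ℂ` onto
the slice `L_I`, and left multiplication through it turns `ℍ` into a complex Banach space. There,
the Cauchy–Riemann equation of `f` on `L_I` says exactly that `z ↦ f (Re z + (Im z) I)` is complex
differentiable, so on the disc `B ∩ L_I` the function `f` is the sum of a series `∑ (q - p₀)ⁿ aₙ`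
(Taylor expansion), and conversely such a series is complex differentiable on every slice. The
coefficients found on different slices agree, because every slice contains the real diameter of
`B`, on which a real power series determines its coefficients; as the slices cover `ℍ`, a single
sequence `aₙ` works on all of `B`.
-/

open Quaternion

noncomputable section

/-- The 2-sphere of imaginary units in the quaternions. -/
def SpH : Set ℍ[ℝ] := {q | q.re = 0 ∧ ‖q‖ = 1}

/-- The slice (complex plane) `L_I = {x + y I : x, y ∈ ℝ}`. -/
def sliceL (I : ℍ[ℝ]) : Set ℍ[ℝ] := {q | ∃ x y : ℝ, q = (x : ℍ[ℝ]) + y • I}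

/-- `f` has continuous partial derivatives on the `I`-slice part of `Ω` and satisfies the
Cauchy–Riemann equation `∂f/∂x + I ∂f/∂y = 0` there. -/
def SliceHolomorphicOn (I : ℍ[ℝ]) (f : ℍ[ℝ] → ℍ[ℝ]) (Ω : Set ℍ[ℝ]) : Prop :=
  ∃ fx fy : ℝ → ℝ → ℍ[ℝ],
    (∀ x y : ℝ, (x : ℍ[ℝ]) + y • I ∈ Ω →
      HasDerivAt (fun t : ℝ => f ((t : ℍ[ℝ]) + y • I)) (fx x y) x) ∧
    (∀ x y : ℝ, (x : ℍ[ℝ]) + y • I ∈ Ω →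
      HasDerivAt (fun t : ℝ => f ((x : ℍ[ℝ]) + t • I)) (fy x y) y) ∧
    ContinuousOn (fun p : ℝ × ℝ => fx p.1 p.2) {p : ℝ × ℝ | (p.1 : ℍ[ℝ]) + p.2 • I ∈ Ω} ∧
    ContinuousOn (fun p : ℝ × ℝ => fy p.1 p.2) {p : ℝ × ℝ | (p.1 : ℍ[ℝ]) + p.2 • I ∈ Ω} ∧
    ∀ x y : ℝ, (x : ℍ[ℝ]) + y • I ∈ Ω → fx x y + I * fy x y = 0

/-- `f` is slice regular on `Ω`. -/
def SliceRegularOn (f : ℍ[ℝ] → ℍ[ℝ]) (Ω : Set ℍ[ℝ]) : Prop :=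
  ∀ I ∈ SpH, SliceHolomorphicOn I f Ω

/-- `Ω` is axially symmetric. -/
def AxSymm (Ω : Set ℍ[ℝ]) : Prop :=
  ∀ (x y : ℝ), ∀ I ∈ SpH, (x : ℍ[ℝ]) + y • I ∈ Ω → ∀ J ∈ SpH, (x : ℍ[ℝ]) + y • J ∈ Ω

/-- `Ω` is an s-domain: a domain meeting the real axis whose slices are connected. -/
def IsSDomain (Ω : Set ℍ[ℝ]) : Prop :=
  IsOpen Ω ∧ IsConnected Ω ∧ (∃ x : ℝ, (x : ℍ[ℝ]) ∈ Ω) ∧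
    ∀ I ∈ SpH, IsConnected (Ω ∩ sliceL I)

/-- The axially symmetric completion of a set `S ⊆ ℍ`. -/
def symmComp (S : Set ℍ[ℝ]) : Set ℍ[ℝ] :=
  {q | ∃ (x y : ℝ) (I : ℍ[ℝ]), I ∈ SpH ∧ q = (x : ℍ[ℝ]) + y • I ∧
    ∃ J ∈ SpH, (x : ℍ[ℝ]) + y • J ∈ S}

/-- A domain of the slice `L_I`: a nonempty connected relatively open subset of `L_I`. -/
def IsSliceDomain (I : ℍ[ℝ]) (D : Set ℍ[ℝ]) : Prop :=
  D ⊆ sliceL I ∧ IsConnected D ∧ IsOpen {p : ℝ × ℝ | (p.1 : ℍ[ℝ]) + p.2 • I ∈ D}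

open Metric Filter Topology ContinuousLinearMap
open scoped ENNReal

namespace FormalMultilinearSeries

variable {𝕜 E : Type*} [NontriviallyNormedField 𝕜] [NormedAddCommGroup E] [NormedSpace 𝕜 E]

variable (𝕜) in
def ofCoeff (a : ℕ → E) : FormalMultilinearSeries 𝕜 𝕜 E :=
  fun n => ContinuousMultilinearMap.mkPiRing 𝕜 (Fin n) (a n)

@[simp] lemma coeff_ofCoeff (a : ℕ → E) (n : ℕ) : (ofCoeff 𝕜 a).coeff n = a n := by
  simp [coeff, ofCoeff]

lemma ofCoeff_apply (a : ℕ → E) (n : ℕ) (z : 𝕜) : (ofCoeff 𝕜 a n fun _ => z) = z ^ n • a n := by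
  rw [apply_eq_pow_smul_coeff, coeff_ofCoeff]

lemma le_radius_ofCoeff {a : ℕ → E} {z : 𝕜} (h : Summable fun n => z ^ n • a n) :
    (‖z‖₊ : ℝ≥0∞) ≤ (ofCoeff 𝕜 a).radius := by
  refine le_radius_of_tendsto _ (l := 0) ?_
  simpa [ofCoeff, norm_smul, mul_comm] using h.tendsto_atTop_zero.norm

end FormalMultilinearSeries

open FormalMultilinearSeries

section PowerSeries

variable {𝕜 E : Type*} [NormedAddCommGroup E]

lemma eq_of_eventually_hasSum_pow_smul [NontriviallyNormedField 𝕜] [NormedSpace 𝕜 E]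
    {g : 𝕜 → E} {a b : ℕ → E}
    (ha : ∀ᶠ z in 𝓝 0, HasSum (fun n => z ^ n • a n) (g z))
    (hb : ∀ᶠ z in 𝓝 0, HasSum (fun n => z ^ n • b n) (g z)) : a = b := by
  have hpa : HasFPowerSeriesAt g (ofCoeff 𝕜 a) 0 := hasFPowerSeriesAt_iff.mpr (by simpa using ha)
  have hpb : HasFPowerSeriesAt g (ofCoeff 𝕜 b) 0 := hasFPowerSeriesAt_iff.mpr (by simpa using hb)
  funext n
  simpa using congrArg (coeff · n) (hpa.eq_formalMultilinearSeries hpb)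

variable [DenselyNormedField 𝕜] [NormedSpace 𝕜 E] {g : 𝕜 → E} {a : ℕ → E} {c : 𝕜} {R : ℝ}

lemma hasFPowerSeriesOnBall_ofCoeff (hR : 0 < R)
    (h : ∀ z ∈ ball c R, HasSum (fun n => (z - c) ^ n • a n) (g z)) :
    HasFPowerSeriesOnBall g (ofCoeff 𝕜 a) c (ENNReal.ofReal R) where
  r_le := by
    refine ENNReal.le_of_forall_nnreal_lt fun r hr => ?_
    obtain ⟨z, hrz, hzR⟩ := NormedField.exists_lt_norm_lt 𝕜 r.2 (ENNReal.coe_lt_ofReal.mp hr)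
    have hsum := (h (c + z) (by simpa using hzR)).summable
    simp only [add_sub_cancel_left] at hsum
    exact le_trans (by exact_mod_cast hrz.le) (le_radius_ofCoeff hsum)
  r_pos := ENNReal.ofReal_pos.mpr hR
  hasSum {y} hy := by
    rw [eball_ofReal, mem_ball_zero_iff] at hy
    simpa [ofCoeff_apply] using h (c + y) (by simpa using hy)

lemma differentiableOn_of_hasSum_pow_smul [CompleteSpace E]
    (h : ∀ z ∈ ball c R, HasSum (fun n => (z - c) ^ n • a n) (g z)) :
    DifferentiableOn 𝕜 g (ball c R) := by
  intro z hz
  have hR : 0 < R := pos_of_mem_ball hz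
  rw [← eball_ofReal] at hz ⊢
  exact (hasFPowerSeriesOnBall_ofCoeff hR h).differentiableOn z hz

end PowerSeries

lemma Complex.differentiableOn_ball_iff_exists_hasSum {E : Type*} [NormedAddCommGroup E]
    [NormedSpace ℂ E] [CompleteSpace E] {g : ℂ → E} {c : ℂ} {R : ℝ} :
    DifferentiableOn ℂ g (ball c R) ↔
      ∃ a : ℕ → E, ∀ z ∈ ball c R, HasSum (fun n => (z - c) ^ n • a n) (g z) := by
  refine ⟨fun h => ⟨fun n => (n.factorial : ℂ)⁻¹ • iteratedDeriv n g c, fun z hz => ?_⟩,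
    fun ⟨a, ha⟩ => differentiableOn_of_hasSum_pow_smul ha⟩
  exact (Complex.hasSum_taylorSeries_on_ball h hz).congr_fun fun n => smul_comm _ _ _

lemma hasFDerivAt_uncurry_of_continuousOn_partials {E : Type*} [NormedAddCommGroup E]
    [NormedSpace ℝ E] {F Fx Fy : ℝ → ℝ → E} {U : Set (ℝ × ℝ)} (hU : IsOpen U)
    (hx : ∀ p ∈ U, HasDerivAt (F · p.2) (Fx p.1 p.2) p.1)
    (hy : ∀ p ∈ U, HasDerivAt (F p.1 ·) (Fy p.1 p.2) p.2)
    (hcx : ContinuousOn (fun p : ℝ × ℝ => Fx p.1 p.2) U)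
    (hcy : ContinuousOn (fun p : ℝ × ℝ => Fy p.1 p.2) U) {p : ℝ × ℝ} (hp : p ∈ U) :
    HasFDerivAt (fun p : ℝ × ℝ => F p.1 p.2)
      ((toSpanSingleton ℝ (Fx p.1 p.2)).coprod (toSpanSingleton ℝ (Fy p.1 p.2))) p := by
  have hcont : Continuous (toSpanSingleton ℝ : E → ℝ →L[ℝ] E) :=
    (toSpanSingletonLIE ℝ E).continuous
  refine (hasStrictFDerivAt_uncurry_coprod (f₁ := fun x y => toSpanSingleton ℝ (Fx x y))
    (f₂ := fun x y => toSpanSingleton ℝ (Fy x y)) ?_ ?_ ?_ ?_).hasFDerivAt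
  · exact eventually_of_mem (hU.mem_nhds hp) fun q hq => (hx q hq).hasFDerivAt
  · exact eventually_of_mem (hU.mem_nhds hp) fun q hq => (hy q hq).hasFDerivAt
  · exact hcont.continuousAt.comp (hcx.continuousAt (hU.mem_nhds hp))
  · exact hcont.continuousAt.comp (hcy.continuousAt (hU.mem_nhds hp))

lemma mul_self_of_mem_SpH {I : ℍ[ℝ]} (hI : I ∈ SpH) : I * I = -1 := by
  have hstar : star I = -I := Quaternion.star_eq_neg.mpr hI.1
  have h := Quaternion.self_mul_star I
  rw [hstar, mul_neg, Quaternion.normSq_eq_norm_mul_self, hI.2, mul_one] at h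
  rw [← neg_neg (I * I), h, Quaternion.coe_one]

lemma normSq_add_smul_of_mem_SpH {I : ℍ[ℝ]} (hI : I ∈ SpH) (x y : ℝ) :
    Quaternion.normSq ((x : ℍ[ℝ]) + y • I) = x ^ 2 + y ^ 2 := by
  have h : Quaternion.normSq I = 1 := by
    rw [Quaternion.normSq_eq_norm_mul_self, hI.2, mul_one]
  rw [Quaternion.normSq_def'] at h ⊢
  simp only [re_add, re_coe, re_smul, imI_add, imI_coe, imI_smul, imJ_add, imJ_coe, imJ_smul,
    imK_add, imK_coe, imK_smul, smul_eq_mul, hI.1] at h ⊢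
  linear_combination y ^ 2 * h

lemma nonempty_SpH : SpH.Nonempty := by
  refine ⟨(Complex.I : ℂ), by simp, (pow_eq_one_iff_of_nonneg (norm_nonneg _) two_ne_zero).mp ?_⟩
  rw [sq, ← Quaternion.normSq_eq_norm_mul_self, Quaternion.normSq_def']
  simp

lemma exists_mem_sliceL (q : ℍ[ℝ]) : ∃ I ∈ SpH, q ∈ sliceL I := by
  by_cases him : q.im = 0
  · obtain ⟨I, hI⟩ := nonempty_SpH
    refine ⟨I, hI, q.re, 0, ?_⟩
    conv_lhs => rw [← Quaternion.re_add_im q, him]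
    simp
  · have hn : ‖q.im‖ ≠ 0 := norm_ne_zero_iff.mpr him
    refine ⟨‖q.im‖⁻¹ • q.im, ⟨by simp, ?_⟩, q.re, ‖q.im‖, ?_⟩
    · rw [norm_smul, norm_inv, norm_norm, inv_mul_cancel₀ hn]
    · rw [smul_smul, mul_inv_cancel₀ hn, one_smul, Quaternion.re_add_im]

def sliceEmb (I : SpH) : ℂ →ₐ[ℝ] ℍ[ℝ] := Complex.liftAux I (mul_self_of_mem_SpH I.2)

lemma sliceEmb_apply (I : SpH) (z : ℂ) : sliceEmb I z = (z.re : ℍ[ℝ]) + z.im • (I : ℍ[ℝ]) :=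
  Complex.liftAux_apply _ _ z

@[simp] lemma sliceEmb_mk (I : SpH) (x y : ℝ) :
    sliceEmb I ⟨x, y⟩ = (x : ℍ[ℝ]) + y • (I : ℍ[ℝ]) :=
  sliceEmb_apply I _

lemma sliceEmb_ofReal (I : SpH) (x : ℝ) : sliceEmb I x = (x : ℍ[ℝ]) :=
  AlgHom.map_coe_real_complex _ x

@[simp] lemma sliceEmb_I (I : SpH) : sliceEmb I Complex.I = I := by
  simp [sliceEmb_apply]

lemma norm_sliceEmb (I : SpH) (z : ℂ) : ‖sliceEmb I z‖ = ‖z‖ := by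
  rw [← sq_eq_sq₀ (norm_nonneg _) (norm_nonneg _), sq, ← Quaternion.normSq_eq_norm_mul_self,
    sliceEmb_apply, normSq_add_smul_of_mem_SpH I.2, Complex.sq_norm, Complex.normSq_apply]
  ring

lemma range_sliceEmb (I : SpH) : Set.range (sliceEmb I) = sliceL I := by
  ext q
  constructor
  · rintro ⟨z, rfl⟩
    exact ⟨z.re, z.im, sliceEmb_apply I z⟩
  · rintro ⟨x, y, rfl⟩
    exact ⟨⟨x, y⟩, sliceEmb_mk I x y⟩

lemma preimage_sliceEmb_ball (I : SpH) (p₀ R : ℝ) :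
    sliceEmb I ⁻¹' ball (p₀ : ℍ[ℝ]) R = ball (p₀ : ℂ) R := by
  ext z
  simp only [Set.mem_preimage, mem_ball, dist_eq_norm, ← sliceEmb_ofReal I p₀, ← map_sub,
    norm_sliceEmb]

lemma image_sliceEmb_ball (I : SpH) (p₀ R : ℝ) :
    sliceEmb I '' ball (p₀ : ℂ) R = ball (p₀ : ℍ[ℝ]) R ∩ sliceL I := by
  rw [← preimage_sliceEmb_ball, Set.image_preimage_eq_inter_range, range_sliceEmb]

lemma continuous_sliceEmb (I : SpH) : Continuous (sliceEmb I) :=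
  AddMonoidHomClass.continuous_of_bound _ 1 fun z => by rw [norm_sliceEmb, one_mul]

/-- `ℍ` as a complex Banach space, `z : ℂ` acting by left multiplication with `sliceEmb I z`: here
the Cauchy–Riemann equation `∂f/∂x + I ∂f/∂y = 0` of `SliceHolomorphicOn` becomes complex
differentiability. -/
def SliceSpace (_I : SpH) : Type := ℍ[ℝ]

namespace SliceSpace

variable (I : SpH)

instance : NormedAddCommGroup (SliceSpace I) := inferInstanceAs (NormedAddCommGroup ℍ[ℝ])

instance : Module ℂ (SliceSpace I) := Module.compHom ℍ[ℝ] (sliceEmb I).toRingHom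

instance : NormedSpace ℂ (SliceSpace I) where
  norm_smul_le c q :=
    (norm_mul_le (sliceEmb I c) (q : ℍ[ℝ])).trans_eq (by rw [norm_sliceEmb]; rfl)

instance : CompleteSpace (SliceSpace I) := inferInstanceAs (CompleteSpace ℍ[ℝ])

def toSlice : ℍ[ℝ] ≃ₗᵢ[ℝ] SliceSpace I where
  toFun q := q
  invFun q := q
  map_add' _ _ := rfl
  map_smul' r q := by
    show _ = sliceEmb I r * q
    rw [sliceEmb_ofReal, Quaternion.coe_mul_eq_smul]
  norm_map' _ := rfl
  left_inv _ := rfl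
  right_inv _ := rfl

lemma toSlice_mul (c : ℂ) (q : ℍ[ℝ]) : toSlice I (sliceEmb I c * q) = c • toSlice I q := rfl

lemma toSlice_symm_smul (c : ℂ) (q : SliceSpace I) :
    (toSlice I).symm (c • q) = sliceEmb I c * (toSlice I).symm q := rfl

end SliceSpace

open SliceSpace

def sliceFun (I : SpH) (f : ℍ[ℝ] → ℍ[ℝ]) (z : ℂ) : SliceSpace I := toSlice I (f (sliceEmb I z))

@[simp] lemma toSlice_symm_sliceFun (I : SpH) (f : ℍ[ℝ] → ℍ[ℝ]) (z : ℂ) :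
    (toSlice I).symm (sliceFun I f z) = f (sliceEmb I z) :=
  (toSlice I).symm_apply_apply _

variable {I : SpH} {f : ℍ[ℝ] → ℍ[ℝ]} {Ω : Set ℍ[ℝ]}

lemma SliceHolomorphicOn.differentiableOn_sliceFun (hΩ : IsOpen Ω)
    (h : SliceHolomorphicOn I f Ω) : DifferentiableOn ℂ (sliceFun I f) (sliceEmb I ⁻¹' Ω) := by
  intro w hw
  obtain ⟨fx, fy, hx, hy, hcx, hcy, hcr⟩ := h
  have hU : IsOpen {p : ℝ × ℝ | (p.1 : ℍ[ℝ]) + p.2 • (I : ℍ[ℝ]) ∈ Ω} := hΩ.preimage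
    ((Quaternion.continuous_coe.comp continuous_fst).add (continuous_snd.smul continuous_const))
  have hwU : (w.re, w.im) ∈ {p : ℝ × ℝ | (p.1 : ℍ[ℝ]) + p.2 • (I : ℍ[ℝ]) ∈ Ω} := by
    simpa [sliceEmb_apply] using hw
  have hF := hasFDerivAt_uncurry_of_continuousOn_partials
    (F := fun x y => f (x + y • (I : ℍ[ℝ]))) hU (fun p hp => hx _ _ hp) (fun p hp => hy _ _ hp)
    hcx hcy hwU
  have hG := (toSlice I).toContinuousLinearEquiv.hasFDerivAt.comp w
    (hF.comp w Complex.equivRealProdCLM.hasFDerivAt)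
  have hfy : fy w.re w.im = I * fx w.re w.im := by
    have := congrArg ((I : ℍ[ℝ]) * ·) (hcr _ _ hwU)
    simp only [mul_add, ← mul_assoc, mul_self_of_mem_SpH I.2, neg_one_mul, mul_zero] at this
    exact (add_neg_eq_zero.mp this).symm
  refine (hG.complexOfReal_hasFDerivAt ?_).differentiableAt.differentiableWithinAt
  simp [hfy, ← toSlice_mul]

lemma differentiableOn_sliceFun_iff (hΩ : IsOpen Ω) :
    DifferentiableOn ℂ (sliceFun I f) (sliceEmb I ⁻¹' Ω) ↔ SliceHolomorphicOn I f Ω := by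
  refine ⟨fun h => ?_, SliceHolomorphicOn.differentiableOn_sliceFun hΩ⟩
  have hU : IsOpen (sliceEmb I ⁻¹' Ω) := hΩ.preimage (continuous_sliceEmb I)
  have hd : ∀ x y : ℝ, (x : ℍ[ℝ]) + y • (I : ℍ[ℝ]) ∈ Ω →
      HasDerivAt (sliceFun I f) (deriv (sliceFun I f) ⟨x, y⟩) ⟨x, y⟩ := fun x y hxy =>
    (h.differentiableAt (hU.mem_nhds (by simpa using hxy))).hasDerivAt
  have hcont : ContinuousOn (deriv (sliceFun I f)) (sliceEmb I ⁻¹' Ω) := (h.deriv hU).continuousOn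
  let D (x y : ℝ) : ℍ[ℝ] := (toSlice I).symm (deriv (sliceFun I f) ⟨x, y⟩)
  have hDcont : ContinuousOn (fun p : ℝ × ℝ => D p.1 p.2)
      {p : ℝ × ℝ | (p.1 : ℍ[ℝ]) + p.2 • (I : ℍ[ℝ]) ∈ Ω} :=
    (toSlice I).symm.continuous.comp_continuousOn
      (hcont.comp Complex.equivRealProdCLM.symm.continuous.continuousOn fun _ hp => by
        simpa using hp)
  refine ⟨D, fun x y => I * D x y, fun x y hxy => ?_, fun x y hxy => ?_, hDcont,
    continuousOn_const.mul hDcont, fun x y _ => ?_⟩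
  · have hγ : HasDerivAt (fun t : ℝ => (⟨t, y⟩ : ℂ)) 1 x := by
      simpa [Complex.mk_eq_add_mul_I] using
        (hasDerivAt_id x).ofReal_comp.add_const ((y : ℂ) * Complex.I)
    simpa [Function.comp_def] using
      (toSlice I).symm.toContinuousLinearEquiv.hasFDerivAt.comp_hasDerivAt
        x ((hd x y hxy).scomp x hγ)
  · have hγ : HasDerivAt (fun t : ℝ => (⟨x, t⟩ : ℂ)) Complex.I y := by
      simpa [Complex.mk_eq_add_mul_I] using
        ((hasDerivAt_id y).ofReal_comp.mul_const Complex.I).const_add (x : ℂ)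
    simpa [Function.comp_def, D, toSlice_symm_smul] using
      (toSlice I).symm.toContinuousLinearEquiv.hasFDerivAt.comp_hasDerivAt
        y ((hd x y hxy).scomp y hγ)
  · rw [← mul_assoc, mul_self_of_mem_SpH I.2, neg_one_mul, add_neg_cancel]

lemma hasSum_sliceFun_iff (p₀ : ℝ) (z : ℂ) (a : ℕ → ℍ[ℝ]) :
    HasSum (fun n => (z - p₀) ^ n • toSlice I (a n)) (sliceFun I f z) ↔
      HasSum (fun n => (sliceEmb I z - p₀) ^ n * a n) (f (sliceEmb I z)) := by
  rw [← (toSlice I).symm.toContinuousLinearEquiv.hasSum']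
  simp [toSlice_symm_smul]

theorem sliceHolomorphicOn_ball_iff (I : SpH) {f : ℍ[ℝ] → ℍ[ℝ]} {p₀ R : ℝ} :
    SliceHolomorphicOn I f (ball (p₀ : ℍ[ℝ]) R) ↔ ∃ a : ℕ → ℍ[ℝ],
      ∀ q ∈ ball (p₀ : ℍ[ℝ]) R ∩ sliceL I, HasSum (fun n => (q - p₀) ^ n * a n) (f q) := by
  rw [← differentiableOn_sliceFun_iff isOpen_ball, preimage_sliceEmb_ball,
    Complex.differentiableOn_ball_iff_exists_hasSum, (toSlice I).surjective.comp_left.exists,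
    ← image_sliceEmb_ball]
  simp only [Set.forall_mem_image, Function.comp_apply, hasSum_sliceFun_iff]

lemma coeff_eq_of_hasSum_on_slices {p₀ R : ℝ} (hR : 0 < R) {f : ℍ[ℝ] → ℍ[ℝ]} {I J : ℍ[ℝ]}
    {a b : ℕ → ℍ[ℝ]}
    (ha : ∀ q ∈ ball (p₀ : ℍ[ℝ]) R ∩ sliceL I, HasSum (fun n => (q - p₀) ^ n * a n) (f q))
    (hb : ∀ q ∈ ball (p₀ : ℍ[ℝ]) R ∩ sliceL J, HasSum (fun n => (q - p₀) ^ n * b n) (f q)) :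
    a = b := by
  have real_mem (K : ℍ[ℝ]) {t : ℝ} (ht : t ∈ ball 0 R) :
      ((p₀ + t : ℝ) : ℍ[ℝ]) ∈ ball (p₀ : ℍ[ℝ]) R ∩ sliceL K := by
    refine ⟨?_, p₀ + t, 0, by simp⟩
    simpa [dist_eq_norm, Quaternion.norm_coe] using ht
  refine eq_of_eventually_hasSum_pow_smul (g := fun t : ℝ => f (p₀ + t)) ?_ ?_ <;>
    filter_upwards [ball_mem_nhds (0 : ℝ) hR] with t ht
  · simpa only [Quaternion.coe_add, add_sub_cancel_left, ← Quaternion.coe_pow,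
      Quaternion.coe_mul_eq_smul] using ha _ (real_mem I ht)
  · simpa only [Quaternion.coe_add, add_sub_cancel_left, ← Quaternion.coe_pow,
      Quaternion.coe_mul_eq_smul] using hb _ (real_mem J ht)

/-- A function on a ball centered at a real point is slice regular if and only if it has a
power series expansion there. -/
theorem slice_regular_iff_power_series
    (p₀ : ℝ) (R : ℝ) (hR : 0 < R) (f : ℍ[ℝ] → ℍ[ℝ]) :
    SliceRegularOn f (Metric.ball (p₀ : ℍ[ℝ]) R) ↔
      ∃ a : ℕ → ℍ[ℝ], ∀ q ∈ Metric.ball (p₀ : ℍ[ℝ]) R,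
        HasSum (fun n : ℕ => (q - (p₀ : ℍ[ℝ])) ^ n * a n) (f q) := by
  constructor
  · intro hf
    obtain ⟨I₀, hI₀⟩ := nonempty_SpH
    obtain ⟨a, ha⟩ := (sliceHolomorphicOn_ball_iff ⟨I₀, hI₀⟩).mp (hf I₀ hI₀)
    refine ⟨a, fun q hq => ?_⟩
    obtain ⟨I, hI, hqI⟩ := exists_mem_sliceL q
    obtain ⟨b, hb⟩ := (sliceHolomorphicOn_ball_iff ⟨I, hI⟩).mp (hf I hI)
    rw [coeff_eq_of_hasSum_on_slices hR ha hb]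
    exact hb q ⟨hq, hqI⟩
  · rintro ⟨a, ha⟩ I hI
    exact (sliceHolomorphicOn_ball_iff ⟨I, hI⟩).mpr ⟨a, fun q hq => ha q hq.1⟩
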